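/- arXiv:0811.3056 — 2 statements merged into one kernel-verified Lean document; each statement's English description precedes it below -/
import Mathlib

section
/- (Functional equation for the lattice Gaussian sum) For every t > 0 and x, x₀ ∈ ℂ, Θ(t, x, x₀) = (αt)^{−1} · Θ(α^{−2} t^{−1}, x₀, x) · χ(x₀, x). -/
noncomputable section

/-- The lattice Γ = ℤ + τℤ, as a map ℤ × ℤ → ℂ. -/
def lat (τ : ℂ) (p : ℤ × ℤ) : ℂ := (p.1 : ℂ) + (p.2 : ℂ) * τ

/-- α = Im τ / π. -/
def alf (τ : ℂ) : ℝ := τ.im / Real.pi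

/-- The character χ(γ, x) = exp(α⁻¹(γ·conj x − conj γ·x)). -/
def chi (τ γ x : ℂ) : ℂ :=
  Complex.exp (((alf τ)⁻¹ : ℝ) * (γ * (starRingEnd ℂ) x - (starRingEnd ℂ) γ * x))

/-- The lattice Gaussian sum Θ(t, x, x₀) = Σ_{γ∈Γ} exp(−t|x+γ|²) χ(γ, x₀). -/
def Theta (τ : ℂ) (t : ℝ) (x x₀ : ℂ) : ℂ :=
  ∑' p : ℤ × ℤ, (Real.exp (-t * ‖x + lat τ p‖ ^ 2) : ℂ) * chi τ (lat τ p) x₀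

/-!
In coordinates γ = m + nτ the summand of Θ is a Gaussian in (m, n) twisted by a character.
Poisson summation, first in m and then in n, turns it into a Gaussian of inverse width. Each
step is Jacobi's transformation formula for a shifted, twisted Gaussian on ℤ. The result is again
a sum over Γ, indexed by the lattice point −l + kτ, because Γ is its own dual for the pairing
(γ, w) ↦ Im(γ w̄) / Im τ that defines χ.
-/

open Complex Real

lemma norm_cexp_ofReal_add_two_pi_I_mul (A B : ℝ) : ‖cexp (A + 2 * π * I * B)‖ = rexp A := by
  rw [Complex.norm_exp]
  simp

lemma chi_eq_cexp (τ γ w : ℂ) :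
    chi τ γ w = cexp (2 * π * I * ((γ.im * w.re - γ.re * w.im) / τ.im : ℝ)) := by
  rw [chi, alf]
  congr 1
  apply Complex.ext
  · simp
  · simp only [inv_div, ofReal_div, mul_im, div_ofReal_re, ofReal_re, sub_im, conj_im, mul_neg,
      conj_re, neg_mul, div_ofReal_im, ofReal_im, zero_div, sub_re, mul_re, sub_neg_eq_add,
      sub_self, mul_zero, add_zero, ofReal_sub, ofReal_mul, re_ofNat, im_ofNat, sub_zero, I_re,
      zero_mul, I_im, mul_one, zero_add]
    ring

lemma norm_chi (τ γ w : ℂ) : ‖chi τ γ w‖ = 1 := by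
  rw [chi_eq_cexp, Complex.norm_exp]
  simp

lemma norm_add_lat_sq (τ x : ℂ) (p : ℤ × ℤ) :
    ‖x + lat τ p‖ ^ 2 = (p.1 + x.re + p.2 * τ.re) ^ 2 + (x.im + p.2 * τ.im) ^ 2 := by
  rw [← normSq_eq_norm_sq, normSq_apply, lat]
  simp only [add_re, add_im, mul_re, mul_im, intCast_re, intCast_im, zero_mul, sub_zero, add_zero,
    zero_add]
  ring

section GaussianOnIntegers

variable {a : ℝ} (ha : 0 < a)
include ha

lemma summable_rexp_gaussian_shift (b : ℝ) : Summable fun m : ℤ => rexp (-a * (m + b) ^ 2) := by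
  -- up to the factor `exp (-a b²)`, this is the modulus of a Jacobi theta summand
  have h := ((summable_jacobiTheta₂_term_iff (I * (a * b / π)) (I * (a / π))).mpr
    (by simpa using div_pos ha pi_pos)).norm.mul_left (rexp (-a * b ^ 2))
  refine h.congr fun m => ?_
  rw [norm_jacobiTheta₂_term, ← Real.exp_add]
  congr 1
  simp only [mul_im, I_re, I_im, zero_mul, one_mul, zero_add, ← ofReal_div, ← ofReal_mul,
    ofReal_re]
  field_simp
  ring

theorem tsum_cexp_gaussian_shift_twist (b c : ℝ) (d : ℂ) :
    ∑' m : ℤ, cexp (-a * (m + b) ^ 2 + 2 * π * I * c * m + d) =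
      √(π / a) * ∑' k : ℤ, cexp (-(π ^ 2 / a) * (k - c) ^ 2 + 2 * π * I * b * (k - c) + d) := by
  have hπ : (π : ℂ) ≠ 0 := ofReal_ne_zero.mpr pi_ne_zero
  have ha' : (a : ℂ) ≠ 0 := ofReal_ne_zero.mpr ha.ne'
  have hsqrt : 1 / ((a / π : ℝ) : ℂ) ^ (1 / 2 : ℂ) = √(π / a) := by
    rw [← ofReal_one, ← ofReal_ofNat, ← ofReal_div, ← ofReal_cpow (div_pos ha pi_pos).le,
      ← Real.sqrt_eq_rpow, ← ofReal_div, one_div, ← Real.sqrt_inv, inv_div]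
  calc ∑' m : ℤ, cexp (-a * (m + b) ^ 2 + 2 * π * I * c * m + d)
      = ∑' m : ℤ, cexp (-π * ((a / π : ℝ) : ℂ) * m ^ 2 + 2 * π * (-(a * b / π) + I * c) * m) *
          cexp (-a * b ^ 2 + d) := by
        refine tsum_congr fun m => ?_
        rw [← Complex.exp_add]
        congr 1
        push_cast
        field_simp
        ring
    _ = _ := by
        rw [tsum_mul_right, Complex.tsum_exp_neg_quadratic (by simpa using div_pos ha pi_pos),
          hsqrt, mul_assoc, ← tsum_mul_right]
        congr 1
        refine tsum_congr fun k => ?_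
        rw [← Complex.exp_add]
        congr 1
        push_cast
        field_simp
        ring_nf
        simp only [I_sq, I_pow_three, I_pow_four]
        ring

/-- Poisson summation bounds the shifted Gaussian sums uniformly in the shift. -/
lemma tsum_rexp_gaussian_shift_le (b : ℝ) :
    ∑' m : ℤ, rexp (-a * (m + b) ^ 2) ≤ √(π / a) * ∑' k : ℤ, rexp (-(π ^ 2 / a) * k ^ 2) := by
  have hpoisson := tsum_cexp_gaussian_shift_twist ha b 0 0
  simp only [ofReal_zero, mul_zero, zero_mul, add_zero, sub_zero] at hpoisson
  have hdual : ∀ k : ℤ, ‖cexp (-(π ^ 2 / a) * k ^ 2 + 2 * π * I * b * k)‖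
      = rexp (-(π ^ 2 / a) * k ^ 2) := fun k => by
    rw [← norm_cexp_ofReal_add_two_pi_I_mul _ (b * k)]
    push_cast
    ring_nf
  have hsum := summable_rexp_gaussian_shift (a := π ^ 2 / a) (by positivity) 0
  simp only [add_zero] at hsum
  calc ∑' m : ℤ, rexp (-a * (m + b) ^ 2)
      = ‖∑' m : ℤ, cexp (-a * (m + b) ^ 2)‖ := by
        rw [← Real.norm_of_nonneg (tsum_nonneg fun m => (exp_pos _).le), ← norm_real, ofReal_tsum]
        push_cast
        rfl
    _ ≤ √(π / a) * ∑' k : ℤ, rexp (-(π ^ 2 / a) * k ^ 2) := by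
        rw [hpoisson, norm_mul, norm_real, Real.norm_of_nonneg (Real.sqrt_nonneg _)]
        gcongr
        exact (norm_tsum_le_tsum_norm (hsum.congr fun k => (hdual k).symm)).trans_eq
          (tsum_congr hdual)

end GaussianOnIntegers

lemma summable_cexp_gaussian_prod {a₁ a₂ : ℝ} (h₁ : 0 < a₁) (h₂ : 0 < a₂) (b₁ b₂ : ℝ)
    (φ : ℤ × ℤ → ℝ) :
    Summable fun p : ℤ × ℤ =>
      cexp ((-a₁ * (p.1 + b₁) ^ 2 - a₂ * (p.2 + b₂) ^ 2 : ℝ) + 2 * π * I * φ p) := by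
  refine Summable.of_norm (((summable_rexp_gaussian_shift h₁ b₁).mul_of_nonneg
    (summable_rexp_gaussian_shift h₂ b₂) (fun _ => (exp_pos _).le)
    (fun _ => (exp_pos _).le)).congr fun p => ?_)
  rw [norm_cexp_ofReal_add_two_pi_I_mul, sub_eq_add_neg, Real.exp_add, neg_mul_eq_neg_mul]

lemma Theta_term_eq_cexp {τ : ℂ} (hτ : τ.im ≠ 0) (t : ℝ) (x w : ℂ) (p : ℤ × ℤ) :
    (rexp (-t * ‖x + lat τ p‖ ^ 2) : ℂ) * chi τ (lat τ p) w =
      cexp (-t * ((p.1 + x.re + p.2 * τ.re) ^ 2 + (x.im + p.2 * τ.im) ^ 2) +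
        2 * π * I * (p.2 * w.re - (p.1 + p.2 * τ.re) * w.im / τ.im)) := by
  have hτ' : (τ.im : ℂ) ≠ 0 := ofReal_ne_zero.mpr hτ
  rw [chi_eq_cexp, norm_add_lat_sq, ofReal_exp, ← Complex.exp_add]
  congr 1
  simp only [lat, add_im, add_re, mul_im, mul_re, intCast_re, intCast_im]
  push_cast
  field_simp
  ring

lemma summable_Theta_term {τ : ℂ} (hτ : 0 < τ.im) {t : ℝ} (ht : 0 < t) (x w : ℂ) :
    Summable fun p : ℤ × ℤ => (rexp (-t * ‖x + lat τ p‖ ^ 2) : ℂ) * chi τ (lat τ p) w := by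
  have hnorm : ∀ p : ℤ × ℤ, ‖(rexp (-t * ‖x + lat τ p‖ ^ 2) : ℂ) * chi τ (lat τ p) w‖ =
      rexp (-t * (p.1 + (x.re + p.2 * τ.re)) ^ 2) *
        rexp (-(t * τ.im ^ 2) * (p.2 + x.im / τ.im) ^ 2) := fun p => by
    rw [norm_mul, norm_chi, mul_one, norm_real, Real.norm_of_nonneg (exp_pos _).le,
      norm_add_lat_sq, ← Real.exp_add]
    congr 1
    field_simp
    ring
  refine Summable.of_norm (Summable.congr ?_ fun p => (hnorm p).symm)
  rw [← (Equiv.prodComm ℤ ℤ).summable_iff, Function.comp_def]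
  simp only [Equiv.prodComm_apply, Prod.fst_swap, Prod.snd_swap]
  refine (summable_prod_of_nonneg fun _ => mul_nonneg (exp_pos _).le (exp_pos _).le).mpr ⟨?_, ?_⟩
  · intro n
    dsimp only
    exact (summable_rexp_gaussian_shift ht _).mul_right _
  dsimp only
  refine ((summable_rexp_gaussian_shift (a := t * τ.im ^ 2) (by positivity) (x.im / τ.im)).mul_left
    (√(π / t) * ∑' k : ℤ, rexp (-(π ^ 2 / t) * k ^ 2))).of_nonneg_of_le
    (fun n => tsum_nonneg fun m => by positivity) fun n => ?_
  rw [tsum_mul_right]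
  exact mul_le_mul_of_nonneg_right (tsum_rexp_gaussian_shift_le ht _) (exp_pos _).le

lemma Theta_eq_tsum_tsum {τ : ℂ} (hτ : 0 < τ.im) {t : ℝ} (ht : 0 < t) (x w : ℂ) :
    Theta τ t x w = ∑' n : ℤ, ∑' m : ℤ,
      cexp (-t * ((m + x.re + n * τ.re) ^ 2 + (x.im + n * τ.im) ^ 2) +
        2 * π * I * (n * w.re - (m + n * τ.re) * w.im / τ.im)) := by
  have hsum := (summable_Theta_term hτ ht x w).congr (Theta_term_eq_cexp hτ.ne' t x w)
  rw [Theta, tsum_congr (Theta_term_eq_cexp hτ.ne' t x w), ← (Equiv.prodComm ℤ ℤ).tsum_eq]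
  exact hsum.prod_symm.tsum_prod

section LatticeGaussian

variable {t : ℝ} (ht : 0 < t) (u : ℝ) {v : ℝ} (hv : 0 < v) (X Y C D : ℝ)
include ht hv

lemma tsum_tsum_gaussian_poisson_fst :
    ∑' n : ℤ, ∑' m : ℤ, cexp (-t * ((m + X + n * u) ^ 2 + (Y + n * v) ^ 2) +
        2 * π * I * (n * C - (m + n * u) * D / v)) =
      √(π / t) * ∑' k : ℤ, ∑' n : ℤ, cexp (-((t * v ^ 2 : ℝ) : ℂ) * (n + (Y / v : ℝ)) ^ 2 +
        2 * π * I * (C + k * u : ℝ) * n +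
        (-(π ^ 2 / t) * (k + D / v) ^ 2 + 2 * π * I * X * (k + D / v))) := by
  have ht' : (t : ℂ) ≠ 0 := ofReal_ne_zero.mpr ht.ne'
  have hv' : (v : ℂ) ≠ 0 := ofReal_ne_zero.mpr hv.ne'
  have hsum : Summable (Function.uncurry fun n k : ℤ =>
      cexp (-(π ^ 2 / t) * (k - (-(D / v) : ℝ)) ^ 2 +
        2 * π * I * (X + n * u : ℝ) * (k - (-(D / v) : ℝ)) +
        (-t * (Y + n * v) ^ 2 + 2 * π * I * (C - u * D / v) * n))) :=
    (summable_cexp_gaussian_prod (a₁ := t * v ^ 2) (a₂ := π ^ 2 / t) (by positivity)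
      (by positivity) (Y / v) (D / v)
      fun p => (X + p.1 * u) * (p.2 + D / v) + (C - u * D / v) * p.1).congr fun p => by
        congr 1
        push_cast
        field_simp
        ring
  calc _ = ∑' n : ℤ, ∑' m : ℤ, cexp (-t * (m + (X + n * u : ℝ)) ^ 2 +
        2 * π * I * (-(D / v) : ℝ) * m +
        (-t * (Y + n * v) ^ 2 + 2 * π * I * (C - u * D / v) * n)) := by
        refine tsum_congr fun n => tsum_congr fun m => ?_
        push_cast
        ring_nf
    _ = ∑' n : ℤ, √(π / t) * ∑' k : ℤ,
        cexp (-(π ^ 2 / t) * (k - (-(D / v) : ℝ)) ^ 2 +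
          2 * π * I * (X + n * u : ℝ) * (k - (-(D / v) : ℝ)) +
          (-t * (Y + n * v) ^ 2 + 2 * π * I * (C - u * D / v) * n)) :=
        tsum_congr fun n => tsum_cexp_gaussian_shift_twist ht _ _ _
    _ = _ := by
        rw [tsum_mul_left, ← hsum.tsum_comm]
        refine congrArg _ (tsum_congr fun k => tsum_congr fun n => ?_)
        congr 1
        push_cast
        field_simp
        ring

theorem tsum_tsum_gaussian_poisson :
    ∑' n : ℤ, ∑' m : ℤ, cexp (-t * ((m + X + n * u) ^ 2 + (Y + n * v) ^ 2) +
        2 * π * I * (n * C - (m + n * u) * D / v)) =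
      π / (t * v) * ∑' k : ℤ, ∑' l : ℤ,
        cexp (-(π ^ 2 / (t * v ^ 2)) * ((C - l + k * u) ^ 2 + (D + k * v) ^ 2) +
          2 * π * I * (k * X - (-l + k * u) * Y / v + (D * X - C * Y) / v)) := by
  have hv' : (v : ℂ) ≠ 0 := ofReal_ne_zero.mpr hv.ne'
  have hsqrt : √(π / t) * √(π / (t * v ^ 2)) = π / (t * v) := by
    rw [← Real.sqrt_mul (by positivity), show π / t * (π / (t * v ^ 2)) = (π / (t * v)) ^ 2 by
      field_simp, Real.sqrt_sq (by positivity)]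
  rw [tsum_tsum_gaussian_poisson_fst ht u hv,
    tsum_congr fun k => tsum_cexp_gaussian_shift_twist (by positivity) _ _ _, tsum_mul_left,
    ← mul_assoc, ← ofReal_mul, hsqrt]
  push_cast
  refine congrArg _ (tsum_congr fun k => tsum_congr fun l => ?_)
  congr 1
  field_simp
  ring

end LatticeGaussian

/-- Functional equation for the lattice Gaussian sum:
Θ(t, x, x₀) = (αt)⁻¹ Θ(α⁻²t⁻¹, x₀, x) χ(x₀, x) for all t > 0. -/
theorem Theta_functional_equation (τ : ℂ) (hτ : 0 < τ.im) (t : ℝ) (ht : 0 < t) (x x₀ : ℂ) :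
    Theta τ t x x₀ =
      ((alf τ * t : ℝ) : ℂ)⁻¹ * Theta τ (((alf τ) ^ 2)⁻¹ * t⁻¹) x₀ x * chi τ x₀ x := by
  have hτ' : (τ.im : ℂ) ≠ 0 := ofReal_ne_zero.mpr hτ.ne'
  have hs : 0 < ((alf τ) ^ 2)⁻¹ * t⁻¹ := by unfold alf; positivity
  have hprefactor : ((alf τ * t : ℝ) : ℂ)⁻¹ = π / (t * τ.im) := by
    have : (π : ℂ) ≠ 0 := ofReal_ne_zero.mpr pi_ne_zero
    unfold alf
    push_cast
    field_simp
  rw [Theta_eq_tsum_tsum hτ ht, tsum_tsum_gaussian_poisson ht τ.re hτ, Theta_eq_tsum_tsum hτ hs,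
    chi_eq_cexp, hprefactor, mul_assoc ((π : ℂ) / (t * τ.im)), ← tsum_mul_right]
  refine congrArg _ (tsum_congr fun k => ?_)
  rw [← tsum_mul_right, ← (Equiv.neg ℤ).tsum_eq]
  refine tsum_congr fun l => ?_
  rw [← Complex.exp_add, Equiv.neg_apply]
  congr 1
  unfold alf
  push_cast
  field_simp
  ring
end
end

section
/- (Quasi-periodicity of the elliptic Green function) Let x ∈ ℂ∖Γ, y ∈ ℝ∖{0}, and set φ̃(x, z, y) = −(1/(4π)) Σ_{γ∈Γ} |γ + x|^{−1} exp(−2π|γ + x||y|) χ(γ + x, z). Then for every z ∈ ℂ: φ̃(x, z + 1, y) = exp(α⁻¹(x − conj x)) · φ̃(x, z, y) and φ̃(x, z + τ, y) = exp(α⁻¹(x·conj τ − conj(x)·τ)) · φ̃(x, z, y). -/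
noncomputable section

/-- The elliptic Green function
φ̃(x, z, y) = −(1/4π) Σ_{γ∈Γ} |γ+x|⁻¹ exp(−2π|γ+x||y|) χ(γ+x, z). -/
def phiT (τ x z : ℂ) (y : ℝ) : ℂ :=
  -(1 / (4 * Real.pi) : ℝ) * ∑' p : ℤ × ℤ,
    ((‖lat τ p + x‖ : ℝ) : ℂ)⁻¹ *
      (Real.exp (-2 * Real.pi * ‖lat τ p + x‖ * |y|) : ℂ) *
      chi τ (lat τ p + x) z

/-!
The character χ is bimultiplicative, and it is trivial on Γ × Γ: for γ = a + bτ and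
δ = c + dτ its exponent is α⁻¹(bc − ad)(τ − conj τ) = 2πi(bc − ad). Hence translating z by
a lattice vector δ multiplies every term χ(γ + x, z) of the series by the same factor
χ(γ + x, δ) = χ(x, δ), which then comes out of the sum (over a field `∑'` commutes with
scalar multiplication whether or not the series converges).
-/

theorem inv_alf_mul_sub_conj {τ : ℂ} (hτ : τ.im ≠ 0) :
    (((alf τ)⁻¹ : ℝ) : ℂ) * (τ - (starRingEnd ℂ) τ) = 2 * Real.pi * Complex.I := by
  have hπ : (Real.pi : ℂ) ≠ 0 := by exact_mod_cast Real.pi_ne_zero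
  have him : (τ.im : ℂ) ≠ 0 := by exact_mod_cast hτ
  rw [Complex.sub_conj, alf]
  push_cast
  field_simp

theorem chi_add_left (τ γ δ z : ℂ) : chi τ (γ + δ) z = chi τ γ z * chi τ δ z := by
  simp only [chi, map_add, ← Complex.exp_add]
  ring_nf

theorem chi_add_right (τ γ z w : ℂ) : chi τ γ (z + w) = chi τ γ z * chi τ γ w := by
  simp only [chi, map_add, ← Complex.exp_add]
  ring_nf

theorem chi_lat_lat {τ : ℂ} (hτ : τ.im ≠ 0) (p q : ℤ × ℤ) : chi τ (lat τ p) (lat τ q) = 1 := by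
  have hexp : (((alf τ)⁻¹ : ℝ) : ℂ) *
      (lat τ p * (starRingEnd ℂ) (lat τ q) - (starRingEnd ℂ) (lat τ p) * lat τ q) =
      ((p.2 * q.1 - p.1 * q.2 : ℤ) : ℂ) * (2 * Real.pi * Complex.I) := by
    rw [← inv_alf_mul_sub_conj hτ]
    simp only [lat, map_add, map_mul, map_intCast]
    push_cast
    ring
  rw [chi, hexp, Complex.exp_int_mul_two_pi_mul_I]

theorem chi_lat_add_add_lat {τ : ℂ} (hτ : τ.im ≠ 0) (p q : ℤ × ℤ) (x z : ℂ) :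
    chi τ (lat τ p + x) (z + lat τ q) = chi τ x (lat τ q) * chi τ (lat τ p + x) z := by
  rw [chi_add_right, chi_add_left τ (lat τ p) x (lat τ q), chi_lat_lat hτ, one_mul, mul_comm]

theorem phiT_add_lat {τ : ℂ} (hτ : τ.im ≠ 0) (q : ℤ × ℤ) (x z : ℂ) (y : ℝ) :
    phiT τ x (z + lat τ q) y = chi τ x (lat τ q) * phiT τ x z y := by
  simp only [phiT, chi_lat_add_add_lat hτ _ q, ← tsum_mul_left]
  exact tsum_congr fun p => by ring

theorem phiT_quasi_periodicity_general (τ : ℂ) (hτ : 0 < τ.im) (x : ℂ)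
    (y : ℝ) (z : ℂ) :
    phiT τ x (z + 1) y =
      Complex.exp (((alf τ)⁻¹ : ℝ) * (x - (starRingEnd ℂ) x)) * phiT τ x z y ∧
    phiT τ x (z + τ) y =
      Complex.exp (((alf τ)⁻¹ : ℝ) * (x * (starRingEnd ℂ) τ - (starRingEnd ℂ) x * τ)) *
        phiT τ x z y := by
  have hlat_one : lat τ (1, 0) = 1 := by simp [lat]
  have hlat_tau : lat τ (0, 1) = τ := by simp [lat]
  constructor
  · simpa only [hlat_one, chi, map_one, mul_one, one_mul] using phiT_add_lat hτ.ne' (1, 0) x z y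
  · simpa only [hlat_tau, chi] using phiT_add_lat hτ.ne' (0, 1) x z y

/-- Quasi-periodicity of the elliptic Green function:
φ̃(x, z+1, y) = exp(α⁻¹(x − conj x)) φ̃(x, z, y) and
φ̃(x, z+τ, y) = exp(α⁻¹(x conj τ − conj x τ)) φ̃(x, z, y). -/
theorem phiT_quasi_periodicity (τ : ℂ) (hτ : 0 < τ.im) (x : ℂ)
    (hx : x ∉ Set.range (lat τ)) (y : ℝ) (hy : y ≠ 0) (z : ℂ) :
    phiT τ x (z + 1) y =
      Complex.exp (((alf τ)⁻¹ : ℝ) * (x - (starRingEnd ℂ) x)) * phiT τ x z y ∧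
    phiT τ x (z + τ) y =
      Complex.exp (((alf τ)⁻¹ : ℝ) * (x * (starRingEnd ℂ) τ - (starRingEnd ℂ) x * τ)) *
        phiT τ x z y :=
  phiT_quasi_periodicity_general τ hτ x y z
end
end
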